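/- arXiv:2311.03852 — 2 statements merged into one kernel-verified Lean document; each statement's English description precedes it below -/
import Mathlib

section
/- For the mixture family with τ > 0: for every x^n ∈ 𝒳^n, every z ∈ ℝ^K and all θ₁, θ₂ ∈ Θ_τ, z^T Ĵ(θ₁; x^n) z ≤ e^{2√K|θ₁−θ₂|/τ} · z^T Ĵ(θ₂; x^n) z. In particular: (i) if |θ₁ − θ₂| ≤ τ/(2√K) then z^T Ĵ(θ₁;x^n) z ≤ (1 + (2e√K/τ)|θ₁−θ₂|)·z^T Ĵ(θ₂;x^n) z; and (ii) for any ε > 0, if |θ₁ − θ₂| < ε then z^T Ĵ(θ₁;x^n) z ≤ C_ε · z^T Ĵ(θ₂;x^n) z with C_ε = e^{2√K ε/τ}. -/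
open MeasureTheory Matrix

noncomputable section

/-- Euclidean norm on `Fin K → ℝ`. -/
def euclNorm {K : ℕ} (v : Fin K → ℝ) : ℝ := Real.sqrt (∑ i, (v i) ^ 2)

/-- The mixture density `p_θ = θ₀ q₀ + Σ_{i=1}^K θᵢ qᵢ`, where `θ₀ = 1 − Σᵢ θᵢ`. -/
def mixP {K : ℕ} {X : Type*} (q : Fin (K + 1) → X → ℝ) (θ : Fin K → ℝ) (x : X) : ℝ :=
  (1 - ∑ i, θ i) * q 0 x + ∑ i : Fin K, θ i * q i.succ x

/-- The restricted parameter set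
`Θ_τ = {θ ∈ [0,1]^K : θᵢ ≥ τ for all i ∈ {0,…,K}}` (with `θ₀ = 1 − Σᵢ θᵢ`). -/
def ThetaTau (K : ℕ) (τ : ℝ) : Set (Fin K → ℝ) :=
  {θ | (∀ i, 0 ≤ θ i ∧ θ i ≤ 1) ∧ (∀ i, τ ≤ θ i) ∧ τ ≤ 1 - ∑ i, θ i}

/-- Empirical Fisher information of the mixture family (one observation):
`Ĵ_{ij}(θ;x) = (qᵢ(x)−q₀(x))(q_j(x)−q₀(x))/p_θ(x)²`. -/
def mixJhat1 {K : ℕ} {X : Type*} (q : Fin (K + 1) → X → ℝ) (θ : Fin K → ℝ) (x : X) :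
    Matrix (Fin K) (Fin K) ℝ :=
  Matrix.of fun i j => (q i.succ x - q 0 x) * (q j.succ x - q 0 x) / (mixP q θ x) ^ 2

/-- Empirical Fisher information of the mixture family for a sample `x^n`. -/
def mixJhatN {K : ℕ} {X : Type*} (q : Fin (K + 1) → X → ℝ) {n : ℕ} (θ : Fin K → ℝ)
    (xn : Fin n → X) : Matrix (Fin K) (Fin K) ℝ :=
  (n : ℝ)⁻¹ • ∑ t, mixJhat1 q θ (xn t)

/-- Fisher information of the mixture family: `J(θ) = E_{p_θ}[Ĵ(θ;X)]`. -/
def mixJ {K : ℕ} {X : Type*} [MeasurableSpace X] (μ : Measure X)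
    (q : Fin (K + 1) → X → ℝ) (θ : Fin K → ℝ) : Matrix (Fin K) (Fin K) ℝ :=
  Matrix.of fun i j => ∫ x, mixP q θ x * mixJhat1 q θ x i j ∂μ


/-! Every mixture weight `θᵢ` (`i = 0, …, K`, with `θ₀ = 1 − Σᵢ θᵢ`) is at least `τ` and moves by
at most `δ = √K |θ₁ − θ₂|` (Cauchy–Schwarz for `θ₀`), so `θ₂ᵢ ≤ θ₁ᵢ + δ ≤ (1 + δ/τ) θ₁ᵢ ≤ e^{δ/τ} θ₁ᵢ`
and hence `p_{θ₂} ≤ e^{δ/τ} p_{θ₁}` pointwise, and symmetrically. Each summand of `zᵀ Ĵ z` is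
`(Σᵢ zᵢ (qᵢ − q₀))² / p_θ²`, so squaring the density ratio gives the factor `e^{2δ/τ}`.
Part (i) follows from `eˣ ≤ 1 + e x` on `[0, 1]` (convexity), part (ii) from monotonicity of `exp`. -/

lemma euclNorm_sub_comm {K : ℕ} (a b : Fin K → ℝ) : euclNorm (a - b) = euclNorm (b - a) := by
  simp only [euclNorm, Pi.sub_apply, ← neg_sub (b _) (a _), neg_sq]

lemma euclNorm_nonneg {K : ℕ} (v : Fin K → ℝ) : 0 ≤ euclNorm v := Real.sqrt_nonneg _

lemma abs_apply_le_euclNorm {K : ℕ} (v : Fin K → ℝ) (i : Fin K) : |v i| ≤ euclNorm v := by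
  rw [← Real.sqrt_sq_eq_abs]
  exact Real.sqrt_le_sqrt (Finset.single_le_sum (fun j _ => sq_nonneg (v j)) (Finset.mem_univ i))

lemma abs_sum_le_sqrt_mul_euclNorm {K : ℕ} (v : Fin K → ℝ) :
    |∑ i, v i| ≤ Real.sqrt K * euclNorm v := by
  rw [euclNorm, ← Real.sqrt_sq_eq_abs, ← Real.sqrt_mul (Nat.cast_nonneg K)]
  simpa using Real.sqrt_le_sqrt (sq_sum_le_card_mul_sum_sq (s := Finset.univ) (f := v))

lemma le_exp_div_mul_of_le_add {τ δ a b : ℝ} (hτ : 0 < τ) (hδ : 0 ≤ δ) (ha : τ ≤ a)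
    (hb : b ≤ a + δ) : b ≤ Real.exp (δ / τ) * a :=
  calc b ≤ a + δ := hb
    _ ≤ (1 + δ / τ) * a := by
      have : δ ≤ δ / τ * a := by
        rw [div_mul_eq_mul_div, le_div_iff₀ hτ]; exact mul_le_mul_of_nonneg_left ha hδ
      linarith
    _ ≤ Real.exp (δ / τ) * a := by
      gcongr
      · linarith
      · linarith [Real.add_one_le_exp (δ / τ)]

lemma exp_le_one_add_exp_one_mul {x : ℝ} (h₀ : 0 ≤ x) (h₁ : x ≤ 1) :
    Real.exp x ≤ 1 + Real.exp 1 * x := by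
  have h := convexOn_exp.2 (Set.mem_univ 0) (Set.mem_univ 1) (sub_nonneg.2 h₁) h₀ (by ring)
  simp only [smul_eq_mul, mul_zero, mul_one, zero_add, Real.exp_zero] at h
  linarith

lemma div_sq_le_sq_mul_div_sq {s a b k : ℝ} (hs : 0 ≤ s) (ha : 0 ≤ a) (hb : 0 ≤ b)
    (hab : a ≤ k * b) (hba : b ≤ k * a) : s / a ^ 2 ≤ k ^ 2 * (s / b ^ 2) := by
  rcases ha.eq_or_lt with rfl | ha
  · simp only [ne_eq, OfNat.ofNat_ne_zero, not_false_eq_true, zero_pow, div_zero]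
    positivity
  have hb : 0 < b := hb.lt_of_ne (by rintro rfl; linarith)
  rw [mul_div_assoc', div_le_div_iff₀ (by positivity) (by positivity)]
  calc s * b ^ 2 ≤ s * (k * a) ^ 2 := by gcongr
    _ = k ^ 2 * s * a ^ 2 := by ring

def mixWeights {K : ℕ} (θ : Fin K → ℝ) : Fin (K + 1) → ℝ := Fin.cons (1 - ∑ i, θ i) θ

section MixtureFamily

variable {K : ℕ} {X : Type*} {q : Fin (K + 1) → X → ℝ}

lemma mixP_eq_sum_mixWeights (θ : Fin K → ℝ) (x : X) :
    mixP q θ x = ∑ i, mixWeights θ i * q i x := by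
  simp [mixP, mixWeights, Fin.sum_univ_succ]

lemma le_mixWeights_of_mem_ThetaTau {τ : ℝ} {θ : Fin K → ℝ} (hθ : θ ∈ ThetaTau K τ)
    (i : Fin (K + 1)) : τ ≤ mixWeights θ i :=
  Fin.cases hθ.2.2 hθ.2.1 i

lemma abs_mixWeights_sub_le (θ₁ θ₂ : Fin K → ℝ) (i : Fin (K + 1)) :
    |mixWeights θ₁ i - mixWeights θ₂ i| ≤ Real.sqrt K * euclNorm (θ₂ - θ₁) := by
  induction i using Fin.cases with
  | zero =>
    simpa [mixWeights, Finset.sum_sub_distrib] using abs_sum_le_sqrt_mul_euclNorm (θ₂ - θ₁)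
  | succ j =>
    have hK : 1 ≤ Real.sqrt K := Real.one_le_sqrt.2 (by exact_mod_cast j.pos)
    calc |θ₁ j - θ₂ j| = |(θ₂ - θ₁) j| := by rw [Pi.sub_apply, abs_sub_comm]
      _ ≤ euclNorm (θ₂ - θ₁) := abs_apply_le_euclNorm _ j
      _ ≤ Real.sqrt K * euclNorm (θ₂ - θ₁) := le_mul_of_one_le_left (Real.sqrt_nonneg _) hK

lemma mixP_le_exp_mul_mixP (hq : ∀ i x, 0 ≤ q i x) {τ : ℝ} (hτ : 0 < τ) {θ₁ θ₂ : Fin K → ℝ}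
    (hθ₁ : θ₁ ∈ ThetaTau K τ) (x : X) :
    mixP q θ₂ x ≤ Real.exp (Real.sqrt K * euclNorm (θ₁ - θ₂) / τ) * mixP q θ₁ x := by
  simp only [mixP_eq_sum_mixWeights, Finset.mul_sum, ← mul_assoc]
  refine Finset.sum_le_sum fun i _ => mul_le_mul_of_nonneg_right ?_ (hq i x)
  refine le_exp_div_mul_of_le_add hτ (mul_nonneg (Real.sqrt_nonneg _) (euclNorm_nonneg _))
    (le_mixWeights_of_mem_ThetaTau hθ₁ i) ?_
  linarith [(abs_le.1 (abs_mixWeights_sub_le θ₂ θ₁ i)).2]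

lemma mixP_nonneg (hq : ∀ i x, 0 ≤ q i x) {τ : ℝ} (hτ : 0 < τ) {θ : Fin K → ℝ}
    (hθ : θ ∈ ThetaTau K τ) (x : X) : 0 ≤ mixP q θ x := by
  rw [mixP_eq_sum_mixWeights]
  exact Finset.sum_nonneg fun i _ =>
    mul_nonneg (hτ.le.trans (le_mixWeights_of_mem_ThetaTau hθ i)) (hq i x)

lemma dotProduct_mixJhat1_mulVec (θ : Fin K → ℝ) (x : X) (z : Fin K → ℝ) :
    z ⬝ᵥ mixJhat1 q θ x *ᵥ z = (z ⬝ᵥ fun i => q i.succ x - q 0 x) ^ 2 / mixP q θ x ^ 2 := by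
  simp only [dotProduct, mulVec, mixJhat1, Matrix.of_apply]
  rw [sq (∑ i, _), Finset.sum_mul_sum, Finset.sum_div]
  refine Finset.sum_congr rfl fun i _ => ?_
  rw [Finset.sum_div, Finset.mul_sum]
  exact Finset.sum_congr rfl fun j _ => by ring

lemma dotProduct_mixJhatN_mulVec {n : ℕ} (θ : Fin K → ℝ) (xn : Fin n → X) (z : Fin K → ℝ) :
    z ⬝ᵥ mixJhatN q θ xn *ᵥ z = (n : ℝ)⁻¹ * ∑ t, z ⬝ᵥ mixJhat1 q θ (xn t) *ᵥ z := by
  simp only [mixJhatN, smul_mulVec, sum_mulVec, dotProduct_smul, dotProduct_sum, smul_eq_mul]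

lemma dotProduct_mixJhatN_mulVec_nonneg {n : ℕ} (θ : Fin K → ℝ) (xn : Fin n → X)
    (z : Fin K → ℝ) : 0 ≤ z ⬝ᵥ mixJhatN q θ xn *ᵥ z := by
  rw [dotProduct_mixJhatN_mulVec]
  refine mul_nonneg (by positivity) (Finset.sum_nonneg fun t _ => ?_)
  rw [dotProduct_mixJhat1_mulVec]
  positivity

lemma dotProduct_mixJhat1_mulVec_le (hq : ∀ i x, 0 ≤ q i x) {τ : ℝ} (hτ : 0 < τ)
    {θ₁ θ₂ : Fin K → ℝ} (hθ₁ : θ₁ ∈ ThetaTau K τ) (hθ₂ : θ₂ ∈ ThetaTau K τ) (x : X)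
    (z : Fin K → ℝ) :
    z ⬝ᵥ mixJhat1 q θ₁ x *ᵥ z ≤
      Real.exp (2 * Real.sqrt K * euclNorm (θ₁ - θ₂) / τ) * (z ⬝ᵥ mixJhat1 q θ₂ x *ᵥ z) := by
  have hexp : Real.exp (2 * Real.sqrt K * euclNorm (θ₁ - θ₂) / τ) =
      Real.exp (Real.sqrt K * euclNorm (θ₁ - θ₂) / τ) ^ 2 := by
    rw [← Real.exp_nat_mul]; ring_nf
  rw [dotProduct_mixJhat1_mulVec, dotProduct_mixJhat1_mulVec, hexp]
  refine div_sq_le_sq_mul_div_sq (sq_nonneg _) (mixP_nonneg hq hτ hθ₁ x)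
    (mixP_nonneg hq hτ hθ₂ x) ?_ (mixP_le_exp_mul_mixP hq hτ hθ₁ x)
  simpa only [euclNorm_sub_comm θ₂] using mixP_le_exp_mul_mixP hq hτ hθ₂ x

lemma dotProduct_mixJhatN_mulVec_le (hq : ∀ i x, 0 ≤ q i x) {τ : ℝ} (hτ : 0 < τ)
    {θ₁ θ₂ : Fin K → ℝ} (hθ₁ : θ₁ ∈ ThetaTau K τ) (hθ₂ : θ₂ ∈ ThetaTau K τ) {n : ℕ}
    (xn : Fin n → X) (z : Fin K → ℝ) :
    z ⬝ᵥ mixJhatN q θ₁ xn *ᵥ z ≤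
      Real.exp (2 * Real.sqrt K * euclNorm (θ₁ - θ₂) / τ) * (z ⬝ᵥ mixJhatN q θ₂ xn *ᵥ z) := by
  rw [dotProduct_mixJhatN_mulVec, dotProduct_mixJhatN_mulVec, mul_left_comm]
  refine mul_le_mul_of_nonneg_left ?_ (by positivity)
  rw [Finset.mul_sum]
  exact Finset.sum_le_sum fun t _ => dotProduct_mixJhat1_mulVec_le hq hτ hθ₁ hθ₂ (xn t) z

end MixtureFamily

theorem stmt16_general {K : ℕ} {X : Type*} (q : Fin (K + 1) → X → ℝ)
    (hq_nonneg : ∀ i x, 0 ≤ q i x)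
    (τ : ℝ) (hτ : 0 < τ) :
    ∀ (n : ℕ) (xn : Fin n → X) (z : Fin K → ℝ),
      ∀ θ₁ ∈ ThetaTau K τ, ∀ θ₂ ∈ ThetaTau K τ,
        (z ⬝ᵥ (mixJhatN q θ₁ xn).mulVec z
          ≤ Real.exp (2 * Real.sqrt K * euclNorm (θ₁ - θ₂) / τ) *
            (z ⬝ᵥ (mixJhatN q θ₂ xn).mulVec z))
        ∧ (euclNorm (θ₁ - θ₂) ≤ τ / (2 * Real.sqrt K) →
            z ⬝ᵥ (mixJhatN q θ₁ xn).mulVec z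
              ≤ (1 + (2 * Real.exp 1 * Real.sqrt K / τ) * euclNorm (θ₁ - θ₂)) *
                (z ⬝ᵥ (mixJhatN q θ₂ xn).mulVec z))
        ∧ (∀ ε : ℝ, 0 < ε → euclNorm (θ₁ - θ₂) < ε →
            z ⬝ᵥ (mixJhatN q θ₁ xn).mulVec z
              ≤ Real.exp (2 * Real.sqrt K * ε / τ) *
                (z ⬝ᵥ (mixJhatN q θ₂ xn).mulVec z)) := by
  intro n xn z θ₁ hθ₁ θ₂ hθ₂
  have hmain := dotProduct_mixJhatN_mulVec_le hq_nonneg hτ hθ₁ hθ₂ xn z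
  have hJ₂ := dotProduct_mixJhatN_mulVec_nonneg (q := q) θ₂ xn z
  have hE := euclNorm_nonneg (θ₁ - θ₂)
  refine ⟨hmain, fun hsmall => hmain.trans ?_, fun ε _ hε => hmain.trans ?_⟩
  · have hx₁ : 2 * Real.sqrt K * euclNorm (θ₁ - θ₂) / τ ≤ 1 := by
      rw [div_le_one hτ]
      rcases (Real.sqrt_nonneg K).eq_or_lt with hK | hK
      · simp [← hK, hτ.le]
      · rwa [le_div_iff₀ (by positivity), mul_comm] at hsmall
    calc _ ≤ (1 + Real.exp 1 * (2 * Real.sqrt K * euclNorm (θ₁ - θ₂) / τ)) *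
          (z ⬝ᵥ mixJhatN q θ₂ xn *ᵥ z) := by
          gcongr; exact exp_le_one_add_exp_one_mul (by positivity) hx₁
      _ = _ := by ring
  · gcongr

/-- **Lemma 9 (empirical Fisher ratio bounds for mixture families).**
For the mixture family with `τ > 0`: for every sample `x^n`, every `z` and all
`θ₁, θ₂ ∈ Θ_τ`, `zᵀ Ĵ(θ₁;x^n) z ≤ e^{2√K|θ₁−θ₂|/τ} · zᵀ Ĵ(θ₂;x^n) z`.
In particular: (i) if `|θ₁−θ₂| ≤ τ/(2√K)` then
`zᵀ Ĵ(θ₁;x^n) z ≤ (1 + (2e√K/τ)|θ₁−θ₂|)·zᵀ Ĵ(θ₂;x^n) z`; and (ii) for any `ε > 0`,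
if `|θ₁−θ₂| < ε` then `zᵀ Ĵ(θ₁;x^n) z ≤ e^{2√K ε/τ} · zᵀ Ĵ(θ₂;x^n) z`. -/
theorem stmt16 {K : ℕ} {X : Type*} (q : Fin (K + 1) → X → ℝ)
    (hq_nonneg : ∀ i x, 0 ≤ q i x)
    (τ : ℝ) (hτ : 0 < τ) (hτ' : τ ≤ 1 / (K + 1)) :
    ∀ (n : ℕ) (xn : Fin n → X) (z : Fin K → ℝ),
      ∀ θ₁ ∈ ThetaTau K τ, ∀ θ₂ ∈ ThetaTau K τ,
        (z ⬝ᵥ (mixJhatN q θ₁ xn).mulVec z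
          ≤ Real.exp (2 * Real.sqrt K * euclNorm (θ₁ - θ₂) / τ) *
            (z ⬝ᵥ (mixJhatN q θ₂ xn).mulVec z))
        ∧ (euclNorm (θ₁ - θ₂) ≤ τ / (2 * Real.sqrt K) →
            z ⬝ᵥ (mixJhatN q θ₁ xn).mulVec z
              ≤ (1 + (2 * Real.exp 1 * Real.sqrt K / τ) * euclNorm (θ₁ - θ₂)) *
                (z ⬝ᵥ (mixJhatN q θ₂ xn).mulVec z))
        ∧ (∀ ε : ℝ, 0 < ε → euclNorm (θ₁ - θ₂) < ε →
            z ⬝ᵥ (mixJhatN q θ₁ xn).mulVec z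
              ≤ Real.exp (2 * Real.sqrt K * ε / τ) *
                (z ⬝ᵥ (mixJhatN q θ₂ xn).mulVec z)) :=
  stmt16_general q hq_nonneg τ hτ
end
end

section
/- For the mixture family with τ > 0: suppose ζ > 0 satisfies z^T J(θ) z ≥ ζ for all unit vectors z ∈ ℝ^K and all θ ∈ Θ_τ. Then for every θ ∈ Θ_τ and every x ∈ 𝒳, ‖V(θ;x)‖_M ≤ K√K/(ζτ²) + 1, where V(θ;x) = J(θ)^{−1/2} Ĵ(θ;x) J(θ)^{−1/2} − I and ‖·‖_M is the entrywise max norm. -/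
open MeasureTheory Matrix

noncomputable section

/-- Entrywise maximum norm of a `K×K` real matrix. -/
def mnorm {K : ℕ} (V : Matrix (Fin K) (Fin K) ℝ) : ℝ :=
  ⨆ ij : Fin K × Fin K, |V ij.1 ij.2|

/-- The inverse of the positive definite square root of a positive definite matrix
(junk value `1` if the matrix is not positive definite). -/
def invSqrtM {K : ℕ} (A : Matrix (Fin K) (Fin K) ℝ) : Matrix (Fin K) (Fin K) ℝ :=
  letI := Classical.propDecidable
  if h : A.PosDef then (h.posSemidef.1.eigenvectorUnitary.1 * diagonal ((↑) ∘ (√·) ∘ h.posSemidef.1.eigenvalues) *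
    (star h.posSemidef.1.eigenvectorUnitary : Matrix (Fin K) (Fin K) ℝ))⁻¹ else 1

/-!
`Ĵ(θ;x)` is the rank-one matrix `d dᵀ / p²` with `dᵢ = qᵢ(x) − q₀(x)` and `p = p_θ(x)`, so
`J^{-1/2} Ĵ J^{-1/2} = w wᵀ / p²` with `w = J^{-1/2} d`. Its entries are bounded by
`‖w‖² / p² = dᵀ J⁻¹ d / p² ≤ ‖d‖² / (ζ p²)`, the last step because `J ≥ ζ I` gives `J⁻¹ ≤ ζ⁻¹ I`.
On `Θ_τ` every weight is at least `τ`, so `p ≥ τ qᵢ(x)` for each `i`, whence `|dᵢ| ≤ p / τ` and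
`‖d‖² ≤ K p² / τ²`. The entries are therefore at most `K / (ζ τ²) ≤ K √K / (ζ τ²)`, and
subtracting the identity costs at most `1` more.
-/

namespace Matrix

variable {n : Type*} [Fintype n]

lemma dotProduct_self_nonneg_real (v : n → ℝ) : 0 ≤ v ⬝ᵥ v := by
  simpa using dotProduct_star_self_nonneg v

lemma dotProduct_self_pos_real {v : n → ℝ} (hv : v ≠ 0) : 0 < v ⬝ᵥ v := by
  simpa using dotProduct_star_self_pos_iff.mpr hv

lemma abs_mul_le_dotProduct_self (w : n → ℝ) (i j : n) : |w i * w j| ≤ w ⬝ᵥ w := by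
  have hle : ∀ k, |w k| ≤ √(w ⬝ᵥ w) := fun k => Real.abs_le_sqrt <| by
    simpa [sq, dotProduct] using
      Finset.single_le_sum (f := fun l => w l * w l) (fun l _ => mul_self_nonneg (w l))
        (Finset.mem_univ k)
  calc |w i * w j| = |w i| * |w j| := abs_mul _ _
    _ ≤ √(w ⬝ᵥ w) * √(w ⬝ᵥ w) := mul_le_mul (hle i) (hle j) (abs_nonneg _) (Real.sqrt_nonneg _)
    _ = w ⬝ᵥ w := Real.mul_self_sqrt (dotProduct_self_nonneg_real w)

lemma mul_dotProduct_self_le_of_forall_unit {J : Matrix n n ℝ} {ζ : ℝ}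
    (h : ∀ z : n → ℝ, z ⬝ᵥ z = 1 → ζ ≤ z ⬝ᵥ J *ᵥ z) (u : n → ℝ) :
    ζ * (u ⬝ᵥ u) ≤ u ⬝ᵥ J *ᵥ u := by
  rcases eq_or_ne u 0 with rfl | hu
  · simp
  set s := u ⬝ᵥ u
  have hs : 0 < s := dotProduct_self_pos_real hu
  have hunit : ((√s)⁻¹ • u) ⬝ᵥ ((√s)⁻¹ • u) = 1 := by
    rw [smul_dotProduct, dotProduct_smul, smul_smul, smul_eq_mul, ← mul_inv,
      Real.mul_self_sqrt hs.le, inv_mul_cancel₀ hs.ne']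
  have hquad : ((√s)⁻¹ • u) ⬝ᵥ J *ᵥ ((√s)⁻¹ • u) = s⁻¹ * (u ⬝ᵥ J *ᵥ u) := by
    rw [mulVec_smul, smul_dotProduct, dotProduct_smul, smul_smul, smul_eq_mul, ← mul_inv,
      Real.mul_self_sqrt hs.le]
  have := h _ hunit
  rwa [hquad, le_inv_mul_iff₀ hs, mul_comm] at this

lemma posDef_of_mul_dotProduct_self_le {J : Matrix n n ℝ} (hJ : J.IsHermitian) {ζ : ℝ}
    (hζ : 0 < ζ) (h : ∀ u : n → ℝ, ζ * (u ⬝ᵥ u) ≤ u ⬝ᵥ J *ᵥ u) : J.PosDef :=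
  PosDef.of_dotProduct_mulVec_pos hJ fun u hu => by
    simpa using (mul_pos hζ (dotProduct_self_pos_real hu)).trans_le (h u)

/-- With `u = J⁻¹ v`, expanding `0 ≤ ‖ζ u - v‖²` and using `ζ ‖u‖² ≤ ⟪u, v⟫` gives
`ζ ⟪u, v⟫ ≤ ‖v‖²`. -/
lemma dotProduct_inv_mulVec_le [DecidableEq n] {J : Matrix n n ℝ} (hJ : IsUnit J) {ζ : ℝ}
    (hζ : 0 < ζ) (h : ∀ u : n → ℝ, ζ * (u ⬝ᵥ u) ≤ u ⬝ᵥ J *ᵥ u) (v : n → ℝ) :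
    v ⬝ᵥ J⁻¹ *ᵥ v ≤ ζ⁻¹ * (v ⬝ᵥ v) := by
  set u := J⁻¹ *ᵥ v
  have hJu : J *ᵥ u = v := by
    rw [mulVec_mulVec, mul_nonsing_inv _ ((isUnit_iff_isUnit_det J).mp hJ), one_mulVec]
  have hlow : ζ * (u ⬝ᵥ u) ≤ v ⬝ᵥ u := by simpa [hJu, dotProduct_comm] using h u
  have hsq : 0 ≤ (ζ • u - v) ⬝ᵥ (ζ • u - v) := dotProduct_self_nonneg_real _
  simp only [sub_dotProduct, dotProduct_sub, smul_dotProduct, dotProduct_smul, smul_eq_mul,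
    dotProduct_comm u v] at hsq
  rw [le_inv_mul_iff₀ hζ]
  nlinarith

lemma mulVec_dotProduct_mulVec_self {S : Matrix n n ℝ} (hS : S.IsSymm) (v : n → ℝ) :
    (S *ᵥ v) ⬝ᵥ (S *ᵥ v) = v ⬝ᵥ (S * S) *ᵥ v := by
  rw [← mulVec_mulVec, dotProduct_mulVec, ← mulVec_transpose, hS.eq, dotProduct_comm]

lemma mul_vecMulVec_mul_of_isSymm {S : Matrix n n ℝ} (hS : S.IsSymm) (v : n → ℝ) :
    S * vecMulVec v v * S = vecMulVec (S *ᵥ v) (S *ᵥ v) := by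
  rw [mul_vecMulVec, vecMulVec_mul, ← mulVec_transpose, hS.eq]

end Matrix

lemma exists_sqrt_and_invSqrtM_eq_inv {K : ℕ} {A : Matrix (Fin K) (Fin K) ℝ}
    (hA : A.PosDef) :
    ∃ R : Matrix (Fin K) (Fin K) ℝ, R.IsHermitian ∧ R * R = A ∧ invSqrtM A = R⁻¹ := by
  set U := hA.posSemidef.1.eigenvectorUnitary
  set D := diagonal (((↑) : ℝ → ℝ) ∘ (√·) ∘ hA.posSemidef.1.eigenvalues)
  refine ⟨U.1 * D * star U.1, ?_, ?_, by rw [invSqrtM, dif_pos hA]; congr!⟩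
  · simp [IsHermitian, star_eq_conjTranspose, mul_assoc, D]
  · have hUU : star U.1 * U.1 = 1 := by simp
    have hDD : D * D = diagonal (((↑) : ℝ → ℝ) ∘ hA.posSemidef.1.eigenvalues) := by
      rw [diagonal_mul_diagonal]
      congr 1
      ext i
      exact Real.mul_self_sqrt (hA.posSemidef.eigenvalues_nonneg i)
    calc U.1 * D * star U.1 * (U.1 * D * star U.1)
        = U.1 * (D * (star U.1 * U.1) * D) * star U.1 := by simp only [mul_assoc]
      _ = A := by
          rw [hUU, mul_one, hDD]
          conv_rhs => rw [hA.posSemidef.1.spectral_theorem, Unitary.conjStarAlgAut_apply]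
          rfl

lemma isSymm_invSqrtM {K : ℕ} {A : Matrix (Fin K) (Fin K) ℝ} (hA : A.PosDef) :
    (invSqrtM A).IsSymm := by
  obtain ⟨R, hR, -, hinv⟩ := exists_sqrt_and_invSqrtM_eq_inv hA
  rw [hinv, ← isHermitian_iff_isSymm]
  exact hR.inv

lemma invSqrtM_mul_self {K : ℕ} {A : Matrix (Fin K) (Fin K) ℝ} (hA : A.PosDef) :
    invSqrtM A * invSqrtM A = A⁻¹ := by
  obtain ⟨R, -, hRR, hinv⟩ := exists_sqrt_and_invSqrtM_eq_inv hA
  rw [hinv, ← Matrix.mul_inv_rev, hRR]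

lemma mnorm_sub_one_le {K : ℕ} {A : Matrix (Fin K) (Fin K) ℝ} {c : ℝ} (hc : 0 ≤ c)
    (h : ∀ i j, |A i j| ≤ c) : mnorm (A - 1) ≤ c + 1 := by
  refine Real.iSup_le (fun ⟨i, j⟩ => ?_) (by linarith)
  calc |(A - 1) i j| ≤ |A i j| + |(1 : Matrix (Fin K) (Fin K) ℝ) i j| := abs_sub _ _
    _ ≤ c + 1 := add_le_add (h i j) (by rw [one_apply]; split_ifs <;> simp)

lemma abs_inv_sq_smul_vecMulVec_apply_le {n : Type*} [Fintype n] {w : n → ℝ} {p c : ℝ}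
    (hc : 0 ≤ c) (h : w ⬝ᵥ w ≤ c * p ^ 2) (i j : n) : |((p ^ 2)⁻¹ • vecMulVec w w) i j| ≤ c := by
  rcases eq_or_ne p 0 with rfl | hp
  · simpa using hc
  rw [Matrix.smul_apply, vecMulVec_apply, smul_eq_mul, abs_mul, abs_of_pos (by positivity),
    inv_mul_le_iff₀ (by positivity)]
  exact (abs_mul_le_dotProduct_self w i j).trans (h.trans_eq (mul_comm _ _))

def mixDiff {K : ℕ} {X : Type*} (q : Fin (K + 1) → X → ℝ) (x : X) : Fin K → ℝ :=
  fun i => q i.succ x - q 0 x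

section Mixture

variable {K : ℕ} {X : Type*} {q : Fin (K + 1) → X → ℝ} {θ : Fin K → ℝ} {τ : ℝ}

lemma mixJhat1_eq_smul_vecMulVec (q : Fin (K + 1) → X → ℝ) (θ : Fin K → ℝ) (x : X) :
    mixJhat1 q θ x = (mixP q θ x ^ 2)⁻¹ • vecMulVec (mixDiff q x) (mixDiff q x) := by
  ext i j
  simp [mixJhat1, mixDiff, vecMulVec_apply, div_eq_inv_mul]

lemma isHermitian_mixJ [MeasurableSpace X] (μ : Measure X) (q : Fin (K + 1) → X → ℝ)
    (θ : Fin K → ℝ) : (mixJ μ q θ).IsHermitian := by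
  ext i j
  simp only [mixJ, conjTranspose_apply, of_apply, star_trivial, mixJhat1]
  congr 1
  ext x
  ring

lemma mul_le_mixP (hτ : 0 ≤ τ) (hθ : θ ∈ ThetaTau K τ) {x : X} (hq : ∀ i, 0 ≤ q i x)
    (i : Fin (K + 1)) : τ * q i x ≤ mixP q θ x := by
  obtain ⟨hθ01, hθτ, hθ0τ⟩ := hθ
  have hterm : ∀ j, 0 ≤ θ j * q j.succ x := fun j => mul_nonneg (hθ01 j).1 (hq _)
  induction i using Fin.cases with
  | zero =>
    have := mul_le_mul_of_nonneg_right hθ0τ (hq 0)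
    have := Finset.sum_nonneg fun j (_ : j ∈ Finset.univ) => hterm j
    rw [mixP]
    linarith
  | succ i =>
    have := mul_le_mul_of_nonneg_right (hθτ i) (hq i.succ)
    have := Finset.single_le_sum (fun j _ => hterm j) (Finset.mem_univ i)
    have := mul_nonneg (hτ.trans hθ0τ) (hq 0)
    rw [mixP]
    linarith

lemma mul_abs_mixDiff_le_mixP (hτ : 0 ≤ τ) (hθ : θ ∈ ThetaTau K τ) {x : X}
    (hq : ∀ i, 0 ≤ q i x) (i : Fin K) : τ * |mixDiff q x i| ≤ mixP q θ x := by
  rw [← abs_of_nonneg hτ, ← abs_mul, mixDiff, mul_sub]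
  exact abs_sub_le_of_nonneg_of_le (mul_nonneg hτ (hq _)) (mul_le_mixP hτ hθ hq _)
    (mul_nonneg hτ (hq _)) (mul_le_mixP hτ hθ hq _)

lemma sq_mul_mixDiff_dotProduct_self_le (hτ : 0 ≤ τ) (hθ : θ ∈ ThetaTau K τ) {x : X}
    (hq : ∀ i, 0 ≤ q i x) : τ ^ 2 * (mixDiff q x ⬝ᵥ mixDiff q x) ≤ K * mixP q θ x ^ 2 := by
  have hsq : ∀ i, τ ^ 2 * (mixDiff q x i * mixDiff q x i) ≤ mixP q θ x ^ 2 := fun i =>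
    calc τ ^ 2 * (mixDiff q x i * mixDiff q x i) = (τ * |mixDiff q x i|) ^ 2 := by
          rw [mul_pow, sq_abs, sq (mixDiff q x i)]
      _ ≤ mixP q θ x ^ 2 :=
          pow_le_pow_left₀ (mul_nonneg hτ (abs_nonneg _)) (mul_abs_mixDiff_le_mixP hτ hθ hq i) 2
  calc τ ^ 2 * (mixDiff q x ⬝ᵥ mixDiff q x)
      = ∑ i, τ ^ 2 * (mixDiff q x i * mixDiff q x i) := Finset.mul_sum _ _ _
    _ ≤ ∑ _i : Fin K, mixP q θ x ^ 2 := Finset.sum_le_sum fun i _ => hsq i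
    _ = K * mixP q θ x ^ 2 := by simp

end Mixture

theorem stmt17_general {K : ℕ} {X : Type*} [MeasurableSpace X] (μ : Measure X)
    (q : Fin (K + 1) → X → ℝ)
    (hq_nonneg : ∀ i x, 0 ≤ q i x)
    (τ : ℝ) (hτ : 0 < τ)
    (ζ : ℝ) (hζ : 0 < ζ)
    (hζJ : ∀ θ ∈ ThetaTau K τ, ∀ z : Fin K → ℝ, (∑ i, (z i) ^ 2) = 1 →
      ζ ≤ z ⬝ᵥ (mixJ μ q θ).mulVec z) :
    ∀ θ ∈ ThetaTau K τ, ∀ x : X,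
      mnorm (invSqrtM (mixJ μ q θ) * mixJhat1 q θ x * invSqrtM (mixJ μ q θ) - 1)
        ≤ K * Real.sqrt K / (ζ * τ ^ 2) + 1 := by
  intro θ hθ x
  set J := mixJ μ q θ
  set S := invSqrtM J
  set d := mixDiff q x
  have hquad : ∀ u, ζ * (u ⬝ᵥ u) ≤ u ⬝ᵥ J *ᵥ u := mul_dotProduct_self_le_of_forall_unit
    fun z hz => hζJ θ hθ z (by simpa [dotProduct, sq] using hz)
  have hJ : J.PosDef := posDef_of_mul_dotProduct_self_le (isHermitian_mixJ μ q θ) hζ hquad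
  have hconj : S * mixJhat1 q θ x * S = (mixP q θ x ^ 2)⁻¹ • vecMulVec (S *ᵥ d) (S *ᵥ d) := by
    rw [mixJhat1_eq_smul_vecMulVec, Matrix.mul_smul, Matrix.smul_mul,
      mul_vecMulVec_mul_of_isSymm (isSymm_invSqrtM hJ)]
  have hnorm : (S *ᵥ d) ⬝ᵥ (S *ᵥ d) ≤ K / (ζ * τ ^ 2) * mixP q θ x ^ 2 := by
    rw [mulVec_dotProduct_mulVec_self (isSymm_invSqrtM hJ), invSqrtM_mul_self hJ,
      div_mul_eq_mul_div, le_div_iff₀ (by positivity)]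
    calc d ⬝ᵥ J⁻¹ *ᵥ d * (ζ * τ ^ 2) ≤ ζ⁻¹ * (d ⬝ᵥ d) * (ζ * τ ^ 2) := by
          gcongr
          exact dotProduct_inv_mulVec_le hJ.isUnit hζ hquad d
      _ = τ ^ 2 * (d ⬝ᵥ d) := by field_simp
      _ ≤ K * mixP q θ x ^ 2 := sq_mul_mixDiff_dotProduct_self_le hτ.le hθ (hq_nonneg · x)
  have hK : (K : ℝ) ≤ K * √K := by
    rcases K.eq_zero_or_pos with rfl | hK
    · simp
    · exact le_mul_of_one_le_right K.cast_nonneg (Real.one_le_sqrt.mpr (by exact_mod_cast hK))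
  rw [hconj]
  calc _ ≤ K / (ζ * τ ^ 2) + 1 :=
        mnorm_sub_one_le (by positivity) (abs_inv_sq_smul_vecMulVec_apply_le (by positivity) hnorm)
    _ ≤ K * √K / (ζ * τ ^ 2) + 1 := by gcongr

/-- **Lemma 10.** For the mixture family with `τ > 0`: if `ζ > 0` is a lower bound for
the quadratic form of `J(θ)` over Euclidean unit vectors on `Θ_τ`, then for every
`θ ∈ Θ_τ` and every `x`, `‖V(θ;x)‖_M ≤ K√K/(ζτ²) + 1`, where
`V(θ;x) = J(θ)^{−1/2} Ĵ(θ;x) J(θ)^{−1/2} − I`. -/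
theorem stmt17 {K : ℕ} {X : Type*} [MeasurableSpace X] (μ : Measure X) [SigmaFinite μ]
    (q : Fin (K + 1) → X → ℝ) (hq_meas : ∀ i, Measurable (q i))
    (hq_nonneg : ∀ i x, 0 ≤ q i x) (hq_prob : ∀ i, ∫ x, q i x ∂μ = 1)
    (τ : ℝ) (hτ : 0 < τ) (hτ' : τ ≤ 1 / (K + 1))
    (ζ : ℝ) (hζ : 0 < ζ)
    (hζJ : ∀ θ ∈ ThetaTau K τ, ∀ z : Fin K → ℝ, (∑ i, (z i) ^ 2) = 1 →
      ζ ≤ z ⬝ᵥ (mixJ μ q θ).mulVec z) :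
    ∀ θ ∈ ThetaTau K τ, ∀ x : X,
      mnorm (invSqrtM (mixJ μ q θ) * mixJhat1 q θ x * invSqrtM (mixJ μ q θ) - 1)
        ≤ K * Real.sqrt K / (ζ * τ ^ 2) + 1 :=
  stmt17_general μ q hq_nonneg τ hτ ζ hζ hζJ
end
end
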